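/- Let V be an n-dimensional vector space over a field 𝕜, let B : V → V be an invertible linear map, and let v : Fin k → V and p : Fin k → V*. Then det(B + Σ_{i=1}^{k} v_i ⊗ p_i) = det B · (1 + Σ over all nonempty subsets S ⊆ {1,…,k} with |S| ≤ min(n,k) of D(p, B⁻¹v, S)), where B⁻¹v denotes the family (B⁻¹v_1, …, B⁻¹v_k). -/

import Mathlib

open Module

section Aux

variable {R : Type*} [CommRing R] {ι : Type*} [Fintype ι] [DecidableEq ι]

lemma det_piecewise_one (S : Finset ι) (M : Matrix ι ι R) :
    Matrix.det (Matrix.of (S.piecewise (M : ι → ι → R) (1 : Matrix ι ι R))) =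
      Matrix.det (Matrix.of fun i j : {a // a ∈ S} => M i j) := by
  classical
  set e : {a // a ∈ S} ⊕ {a // ¬ a ∈ S} ≃ ι := Equiv.sumCompl (· ∈ S) with he
  rw [← Matrix.det_submatrix_equiv_self e (Matrix.of (S.piecewise (M : ι → ι → R) (1 : Matrix ι ι R)))]
  have key : (Matrix.of (S.piecewise (M : ι → ι → R) (1 : Matrix ι ι R))).submatrix e e =
      Matrix.fromBlocks (Matrix.of fun i j : {a // a ∈ S} => M i j)
        (Matrix.of fun (i : {a // a ∈ S}) (j : {a // ¬ a ∈ S}) => M i j) 0 1 := by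
    ext i j
    cases i with
    | inl i =>
      cases j with
      | inl j => simp [Matrix.submatrix_apply, he, Finset.piecewise_eq_of_mem _ _ _ i.2, Finset.piecewise, i.2]
      | inr j => simp [Matrix.submatrix_apply, he, Finset.piecewise_eq_of_mem _ _ _ i.2, Finset.piecewise, i.2]
    | inr i =>
      cases j with
      | inl j =>
        have hij : (i : ι) ≠ (j : ι) := fun h => i.2 (h ▸ j.2)
        simp [Matrix.submatrix_apply, he, Finset.piecewise_eq_of_notMem _ _ _ i.2, Finset.piecewise, i.2,
          Matrix.one_apply_ne hij]
      | inr j =>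
        rcases eq_or_ne i j with h | h
        · subst h
          simp [Matrix.submatrix_apply, he, Finset.piecewise_eq_of_notMem _ _ _ i.2, Finset.piecewise, i.2]
        · have hij : (i : ι) ≠ (j : ι) := fun hh => h (Subtype.ext hh)
          simp [Matrix.submatrix_apply, he, Finset.piecewise_eq_of_notMem _ _ _ i.2, Finset.piecewise, i.2,
            Matrix.one_apply_ne hij, Matrix.one_apply_ne h]
  rw [key, Matrix.det_fromBlocks_zero₂₁, Matrix.det_one, mul_one]

lemma det_one_add_eq_sum_minors (M : Matrix ι ι R) :
    Matrix.det (1 + M) =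
      ∑ S : Finset ι, Matrix.det (Matrix.of fun i j : {a // a ∈ S} => M i j) := by
  classical
  rw [add_comm]
  have h : Matrix.det (M + 1) =
      ∑ S : Finset ι, Matrix.det (S.piecewise (M : ι → ι → R) (1 : Matrix ι ι R)) := by
    have := (Matrix.detRowAlternating (R := R) (n := ι)).toMultilinearMap.map_add_univ
      (M : ι → ι → R) (1 : Matrix ι ι R)
    exact this
  rw [h]
  exact Finset.sum_congr rfl fun S _ => det_piecewise_one S M

lemma det_mul_eq_zero_of_card_lt {K : Type*} [Field K] {m r : Type*} [Fintype m] [Fintype r]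
    [DecidableEq m] (P : Matrix m r K) (U : Matrix r m K)
    (h : Fintype.card r < Fintype.card m) : Matrix.det (P * U) = 0 := by
  by_contra hdet
  have hUnit : IsUnit (P * U) := (Matrix.isUnit_iff_isUnit_det _).mpr (Ne.isUnit hdet)
  have h1 : (P * U).rank = Fintype.card m := Matrix.rank_of_isUnit _ hUnit
  have h2 : (P * U).rank ≤ Fintype.card r :=
    le_trans (Matrix.rank_mul_le_left P U) (Matrix.rank_le_card_width P)
  omega

end Aux

/-- `D p u S` : the determinant of the `|S| × |S|` matrix `(p i (u j))_{i, j ∈ S}`;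
it equals the wedge `⋀_{i ∈ S} p i` evaluated on the family `(u i)_{i ∈ S}`. -/
noncomputable def detD {𝕜 V : Type*} [Field 𝕜] [AddCommGroup V] [Module 𝕜 V] {k : ℕ}
    (p : Fin k → Dual 𝕜 V) (u : Fin k → V) (S : Finset (Fin k)) : 𝕜 :=
  Matrix.det (Matrix.of fun i j : {a // a ∈ S} => p i (u j))

/-- for invertible `B`,
`det (B + ∑ i, v i ⊗ p i) = det B * (1 + ∑_{∅ ≠ S ⊆ {1,…,k}, |S| ≤ min n k} D(p, B⁻¹v, S))`,
where `B⁻¹v` is the family `(B⁻¹ (v 1), …, B⁻¹ (v k))`. -/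
theorem det_of_perturbed_operator
    (𝕜 V : Type*) [Field 𝕜] [AddCommGroup V] [Module 𝕜 V] [FiniteDimensional 𝕜 V]
    {n k : ℕ} (hn : finrank 𝕜 V = n)
    (B : V ≃ₗ[𝕜] V) (v : Fin k → V) (p : Fin k → Dual 𝕜 V) :
    LinearMap.det ((B : Module.End 𝕜 V) + ∑ i, (p i).smulRight (v i)) =
      LinearMap.det (B : Module.End 𝕜 V) *
        (1 + ∑ S ∈ Finset.univ.filter
              (fun S : Finset (Fin k) => S.Nonempty ∧ S.card ≤ min n k),
            detD p (fun i => B.symm (v i)) S) := by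
  classical
  subst hn
  set u : Fin k → V := fun i => B.symm (v i) with hu
  -- Step 1: factor out B
  have hfactor : (B : Module.End 𝕜 V) + ∑ i, (p i).smulRight (v i) =
      (B : Module.End 𝕜 V) ∘ₗ (LinearMap.id + ∑ i, (p i).smulRight (u i)) := by
    ext x
    simp [LinearMap.sum_apply, LinearMap.smulRight_apply, map_sum, map_smul, hu,
      LinearEquiv.apply_symm_apply]
  rw [hfactor, LinearMap.det_comp]
  congr 1
  -- Step 2: pass to matrices
  set b := finBasis 𝕜 V with hb
  set N := finrank 𝕜 V with hN
  rw [← LinearMap.det_toMatrix b]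
  rw [map_add, LinearMap.toMatrix_id]
  set U : Matrix (Fin N) (Fin k) 𝕜 := Matrix.of fun x i => b.repr (u i) x with hU
  set P : Matrix (Fin k) (Fin N) 𝕜 := Matrix.of fun i x => p i (b x) with hP
  have hT : (LinearMap.toMatrix b b) (∑ i, (p i).smulRight (u i)) = U * P := by
    ext x y
    simp [LinearMap.toMatrix_apply, Matrix.mul_apply, LinearMap.sum_apply,
      LinearMap.smulRight_apply, map_sum, hU, hP, mul_comm]
  have hPU : P * U = Matrix.of fun i j => p i (u j) := by
    ext i j
    rw [Matrix.mul_apply]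
    simp only [hU, hP, Matrix.of_apply]
    have : p i (u j) = p i (∑ x, b.repr (u j) x • b x) := by rw [Basis.sum_repr]
    rw [this, map_sum]
    exact Finset.sum_congr rfl fun x _ => by rw [map_smul, smul_eq_mul, mul_comm]
  rw [hT, Matrix.det_one_add_mul_comm, hPU]
  -- Step 3: expand as sum over principal minors
  rw [det_one_add_eq_sum_minors]
  have hterm : ∀ S : Finset (Fin k),
      Matrix.det (Matrix.of fun i j : {a // a ∈ S} =>
        (Matrix.of fun i j : Fin k => p i (u j)) i j) = detD p u S := fun S => rfl
  -- vanishing of large minors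
  have hzero : ∀ S : Finset (Fin k), N < S.card → detD p u S = 0 := by
    intro S hS
    have hfac : (Matrix.of fun i j : {a // a ∈ S} => p (i : Fin k) (u (j : Fin k))) =
        (P.submatrix (Subtype.val : {a // a ∈ S} → Fin k) _root_.id) *
          (U.submatrix _root_.id (Subtype.val : {a // a ∈ S} → Fin k)) := by
      ext i j
      rw [Matrix.mul_apply]
      simp only [Matrix.submatrix_apply, Matrix.of_apply, hU, hP, _root_.id]
      have : p (i : Fin k) (u (j : Fin k)) =
          p (i : Fin k) (∑ x, b.repr (u (j : Fin k)) x • b x) := by rw [Basis.sum_repr]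
      rw [this, map_sum]
      exact Finset.sum_congr rfl fun x _ => by rw [map_smul, smul_eq_mul, mul_comm]
    rw [detD, hfac]
    refine det_mul_eq_zero_of_card_lt _ _ ?_
    simpa [Fintype.card_coe] using hS
  -- Step 4: split the sum
  simp only [hterm]
  rw [← Finset.sum_filter_add_sum_filter_not Finset.univ
    (fun S : Finset (Fin k) => S.Nonempty ∧ S.card ≤ min N k) (fun S => detD p u S)]
  rw [add_comm]
  congr 1
  rw [Finset.sum_eq_single_of_mem (∅ : Finset (Fin k))]
  · rw [detD]
    have : IsEmpty {a : Fin k // a ∈ (∅ : Finset (Fin k))} :=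
      ⟨fun a => absurd a.2 (Finset.notMem_empty a.1)⟩
    exact Matrix.det_isEmpty
  · simp
  · intro S hS hne
    simp only [Finset.mem_filter, Finset.mem_univ, true_and] at hS
    have hSne : S.Nonempty := Finset.nonempty_of_ne_empty hne
    have hcard : ¬ S.card ≤ min N k := fun h => hS ⟨hSne, h⟩
    have hk : S.card ≤ k := by
      simpa using Finset.card_le_univ S
    exact hzero S (by omega)
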